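/- Let H : Fin N → Fin N be a forest parent function, let i, j : Fin N, set rᵢ = root H i and rⱼ = root H j, and assume rᵢ ≠ rⱼ. Define the merged function H' = Function.update H rᵢ rⱼ. Then H' is a forest parent function, and for every k : Fin N, root H' k = rⱼ if root H k = rᵢ or root H k = rⱼ, and root H' k = root H k otherwise. Consequently, for all a b : Fin N, root H' a = root H' b if and only if root H a = root H b, or both root H a and root H b lie in {rᵢ, rⱼ}; i.e., merging joins exactly the two proto-features containing i and j and leaves all other proto-features unchanged. -/
import Mathlib


/-- `H` is a forest parent function: there is a rank function `r` that strictly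
decreases when passing from a non-root node to its parent. -/
def IsForest {N : ℕ} (H : Fin N → Fin N) : Prop :=
  ∃ r : Fin N → ℕ, ∀ i, H i ≠ i → r (H i) < r i

/-- The root of `i` in the forest `H`: the fixed point of `H` reached by
iterating `H` starting from `i` (for a forest parent function on `Fin N`,
`N` iterations always suffice to reach the fixed point). -/
def root {N : ℕ} (H : Fin N → Fin N) (i : Fin N) : Fin N :=
  H^[N] i

lemma root_fixed {N : ℕ} {H : Fin N → Fin N} (hH : IsForest H) (k : Fin N) :
    H (root H k) = root H k := by
  obtain ⟨r, hr⟩ := hH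
  by_contra hne
  have hnf : ∀ n, n ≤ N → H (H^[n] k) ≠ H^[n] k := by
    intro n hn hfix
    apply hne
    have h1 : H^[N] k = H^[n] k := by
      have h2 : N = (N - n) + n := (Nat.sub_add_cancel hn).symm
      have e1 : H^[N] k = H^[(N-n)+n] k := congrArg (fun m => H^[m] k) h2
      rw [e1, Function.iterate_add_apply, Function.iterate_fixed hfix]
    simp only [root]; rw [h1, hfix]
  have hdec : ∀ n, n ≤ N → ∀ m, m < n → r (H^[n] k) < r (H^[m] k) := by
    intro n
    induction n with
    | zero => omega
    | succ n ih =>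
      intro hn m hmn
      have hstep : r (H^[n+1] k) < r (H^[n] k) := by
        rw [Function.iterate_succ_apply']
        exact hr _ (hnf n (by omega))
      rcases Nat.lt_or_ge m n with h | h
      · exact hstep.trans (ih (by omega) m h)
      · have : m = n := by omega
        subst this; exact hstep
  have hinj : Function.Injective (fun n : Fin (N+1) => H^[n.val] k) := by
    intro a b hab
    by_contra hne'
    have hv : a.val ≠ b.val := fun h => hne' (Fin.ext h)
    simp only at hab
    rcases Nat.lt_or_ge a.val b.val with h | h
    · have := hdec b.val (by omega) a.val h
      rw [hab] at this; omega
    · have := hdec a.val (by omega) b.val (by omega)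
      rw [hab] at this; omega
  have := Fintype.card_le_of_injective _ hinj
  simp at this

lemma root_apply {N : ℕ} {H : Fin N → Fin N} (hH : IsForest H) (k : Fin N) :
    root H (H k) = root H k := by
  have : root H (H k) = H (H^[N] k) := by
    simp only [root]; rw [← Function.iterate_succ_apply, Function.iterate_succ_apply']
  rw [this]
  exact root_fixed hH k

lemma root_of_fixed {N : ℕ} {H : Fin N → Fin N} {k : Fin N} (h : H k = k) :
    root H k = k := Function.iterate_fixed h N


/-- Merging the two distinct proto-features containing `i` and `j` by setting
the parent of `rᵢ = root H i` to `rⱼ = root H j` yields a forest parent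
function in which exactly the two proto-features of `i` and `j` are joined
(with new common root `rⱼ`) and all other proto-features are unchanged. -/
theorem merge_correct {N : ℕ} (H : Fin N → Fin N) (hH : IsForest H)
    (i j : Fin N) (hij : root H i ≠ root H j) :
    IsForest (Function.update H (root H i) (root H j)) ∧
      (∀ k : Fin N,
        ((root H k = root H i ∨ root H k = root H j) →
          root (Function.update H (root H i) (root H j)) k = root H j) ∧
        ((root H k ≠ root H i ∧ root H k ≠ root H j) →
          root (Function.update H (root H i) (root H j)) k = root H k)) ∧
      (∀ a b : Fin N,
        root (Function.update H (root H i) (root H j)) a =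
            root (Function.update H (root H i) (root H j)) b ↔
          (root H a = root H b ∨
            ((root H a = root H i ∨ root H a = root H j) ∧
              (root H b = root H i ∨ root H b = root H j)))) := by
  set ri := root H i with hri
  set rj := root H j with hrj
  set H' := Function.update H ri rj with hH'def
  have hfi : H ri = ri := root_fixed hH i
  have hfj : H rj = rj := root_fixed hH j
  have hroi : root H ri = ri := root_of_fixed hfi
  have hroj : root H rj = rj := root_of_fixed hfj
  have hji : rj ≠ ri := Ne.symm hij
  obtain ⟨r, hr⟩ := hH
  have hH : IsForest H := ⟨r, hr⟩
  -- H' is a forest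
  have hH' : IsForest H' := by
    refine ⟨fun x => if root H x = ri then r x + (Finset.univ.sup r) + 1 else r x, ?_⟩
    intro x hx
    by_cases hxi : x = ri
    · subst hxi
      have h1 : H' ri = rj := Function.update_self _ _ _
      have hle : r rj ≤ Finset.univ.sup r := Finset.le_sup (Finset.mem_univ rj)
      simp [h1, hroi, hroj, hji]
      omega
    · have h1 : H' x = H x := Function.update_of_ne hxi _ _
      rw [h1] at hx ⊢
      have h2 : root H (H x) = root H x := root_apply hH x
      simp only [h2]
      have := hr x hx
      split_ifs <;> omega
  -- fixed-point case of the key formula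
  have hfixcase : ∀ k : Fin N, H k = k →
      root H' k = if root H k = ri then rj else root H k := by
    intro k hkf
    have hroot : root H k = k := root_of_fixed hkf
    by_cases hki : k = ri
    · rw [if_pos (hroot.trans hki)]
      have h1 : H' k = rj := by rw [hki]; exact Function.update_self _ _ _
      have h2 : root H' (H' k) = root H' k := root_apply hH' k
      rw [h1] at h2
      have h3 : H' rj = rj := by
        rw [hH'def, Function.update_of_ne hji, hfj]
      rw [root_of_fixed h3] at h2
      exact h2.symm
    · have h1 : H' k = k := by
        rw [hH'def, Function.update_of_ne hki, hkf]
      rw [root_of_fixed h1, hroot, if_neg hki]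
  -- key formula
  have key : ∀ k : Fin N, root H' k = if root H k = ri then rj else root H k := by
    suffices h : ∀ n : ℕ, ∀ k : Fin N, r k ≤ n →
        root H' k = if root H k = ri then rj else root H k by
      intro k; exact h (r k) k le_rfl
    intro n
    induction n with
    | zero =>
      intro k hk
      by_cases hkf : H k = k
      · exact hfixcase k hkf
      · exact absurd (hr k hkf) (by omega)
    | succ n ih =>
      intro k hk
      by_cases hkf : H k = k
      · exact hfixcase k hkf
      · have hki : k ≠ ri := fun h => hkf (by rw [h, hfi])
        have h1 : H' k = H k := Function.update_of_ne hki _ _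
        calc root H' k = root H' (H' k) := (root_apply hH' k).symm
          _ = root H' (H k) := by rw [h1]
          _ = if root H (H k) = ri then rj else root H (H k) :=
              ih (H k) (by have := hr k hkf; omega)
          _ = if root H k = ri then rj else root H k := by rw [root_apply hH k]
  refine ⟨hH', ?_, ?_⟩
  · intro k
    constructor
    · rintro (h | h)
      · rw [key k, if_pos h]
      · rw [key k, if_neg (by rw [h]; exact hji), h]
    · rintro ⟨h1, _⟩
      rw [key k, if_neg h1]
  · intro a b
    rw [key a, key b]
    by_cases ha : root H a = ri <;> by_cases hb : root H b = ri <;>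
      by_cases ha' : root H a = rj <;> by_cases hb' : root H b = rj <;>
      simp_all <;> tauto
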